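/- arXiv:2210.04342 — 7 statements merged into one kernel-verified Lean document; each statement's English description precedes it below -/
import Mathlib

section
/- Let J = (-1/(1+α+β)) · [[1, α, β], [β, 1, α], [α, β, 1]] + μ · [[-2, 1, 1], [1, -2, 1], [1, 1, -2]]. Then the eigenvalues of J are λ₁ = -1 and λ_{2,3} = [(α+β-2)/(2(1+α+β)) - 3μ] ± i·[√3(β-α)/(2(1+α+β))]. -/
/-!
`J` is circulant with first row `(a, b, c)`, so `(1, ω, ω²)` is an eigenvector for each cube root
of unity `ω`, with eigenvalue `a + b ω + c ω²`: the row sum `-1` for `ω = 1`, and `λ_{2,3}` for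
`ω = (-1 ± √3 i) / 2`. Factoring `det (z - J)` only needs `ω + ω' = -1` and `ω ω' = 1` for the two
non-real roots `ω, ω'`.
-/

open Matrix Complex

theorem Matrix.exists_mulVec_eq_smul_iff_det_eq_zero {n R : Type*} [Fintype n] [DecidableEq n]
    [CommRing R] [IsDomain R] (M : Matrix n n R) (z : R) :
    (∃ v ≠ 0, M *ᵥ v = z • v) ↔ (z • 1 - M).det = 0 := by
  rw [← exists_mulVec_eq_zero_iff]
  refine exists_congr fun v => and_congr_right fun _ => ?_
  rw [sub_mulVec, smul_mulVec, one_mulVec, sub_eq_zero, eq_comm]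

theorem Matrix.det_circulant_fin_three {R : Type*} [CommRing R] (a b c ω ω' : R)
    (hsum : ω + ω' = -1) (hprod : ω * ω' = 1) :
    !![a, b, c; c, a, b; b, c, a].det
      = (a + b + c) * (a + b * ω + c * ω') * (a + b * ω' + c * ω) := by
  obtain rfl : ω' = -1 - ω := by linear_combination hsum
  rw [det_fin_three]
  simp only [of_apply, cons_val', cons_val_zero, cons_val_one, cons_val_two, empty_val',
    cons_val_fin_one, head_cons, tail_cons, head_fin_const]
  linear_combination (-(a + b + c) * (b - c) ^ 2) * hprod

theorem Matrix.eigenvalues_circulant_fin_three {K : Type*} [Field K] (a b c ω ω' : K)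
    (hsum : ω + ω' = -1) (hprod : ω * ω' = 1) :
    {z : K | ∃ v ≠ 0, !![a, b, c; c, a, b; b, c, a] *ᵥ v = z • v}
      = {a + b + c, a + b * ω + c * ω', a + b * ω' + c * ω} := by
  ext z
  have hshift : z • 1 - !![a, b, c; c, a, b; b, c, a]
      = !![z - a, -b, -c; -c, z - a, -b; -b, -c, z - a] := by
    ext i j
    fin_cases i <;> fin_cases j <;> simp [sub_eq_add_neg]
  have hdet : (z • 1 - !![a, b, c; c, a, b; b, c, a]).det
      = (z - (a + b + c)) * (z - (a + b * ω + c * ω')) * (z - (a + b * ω' + c * ω)) := by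
    rw [hshift, det_circulant_fin_three _ _ _ ω ω' hsum hprod]
    ring
  simp only [Set.mem_ofPred_eq, exists_mulVec_eq_smul_iff_det_eq_zero, hdet, mul_eq_zero,
    sub_eq_zero, Set.mem_insert_iff, Set.mem_singleton_iff, or_assoc]

/-- The eigenvalues of the Jacobian of the linearly-perturbed May–Leonard
system at the equal-population fixed point are `-1` and
`(α+β-2)/(2(1+α+β)) - 3μ ± i √3 (β-α)/(2(1+α+β))`. -/
theorem jacobian_ec_eigenvalues (α β μ : ℝ) (hα : 0 < α) (hβ : 0 < β) :
    let J : Matrix (Fin 3) (Fin 3) ℝ :=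
      (-1 / (1 + α + β)) • !![1, α, β; β, 1, α; α, β, 1] +
        μ • !![-2, 1, 1; 1, -2, 1; 1, 1, -2]
    let lamRe : ℝ := (α + β - 2) / (2 * (1 + α + β)) - 3 * μ
    let lamIm : ℝ := Real.sqrt 3 * (β - α) / (2 * (1 + α + β))
    {z : ℂ | ∃ v : Fin 3 → ℂ, v ≠ 0 ∧ (J.map (Complex.ofReal)).mulVec v = z • v}
      = {-1, (lamRe : ℂ) + lamIm * Complex.I, (lamRe : ℂ) - lamIm * Complex.I} := by
  intro J lamRe lamIm
  have hs : (1 + α + β : ℂ) ≠ 0 := by exact_mod_cast (show (0 : ℝ) < 1 + α + β by linarith).ne'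
  have hsqrt : (Real.sqrt 3 : ℂ) ^ 2 = 3 := by
    rw [← ofReal_pow, Real.sq_sqrt zero_le_three, ofReal_ofNat]
  set a : ℂ := -1 / (1 + α + β) - 2 * μ
  set b : ℂ := -α / (1 + α + β) + μ
  set c : ℂ := -β / (1 + α + β) + μ
  set ω : ℂ := (-1 + Real.sqrt 3 * I) / 2
  set ω' : ℂ := (-1 - Real.sqrt 3 * I) / 2
  have hJ : J.map ofReal = !![a, b, c; c, a, b; b, c, a] := by
    ext i j
    fin_cases i <;> fin_cases j <;> simp [J, a, b, c] <;> ring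
  rw [hJ, eigenvalues_circulant_fin_three a b c ω ω' (by ring)
    (by linear_combination (-I ^ 2 / 4) * hsqrt - 3 / 4 * I_sq)]
  have h₁ : a + b + c = -1 := by
    simp only [a, b, c]; field_simp; ring
  have h₂ : a + b * ω + c * ω' = lamRe + lamIm * I := by
    simp only [lamRe, lamIm, a, b, c, ω, ω']; push_cast; field_simp; ring
  have h₃ : a + b * ω' + c * ω = lamRe - lamIm * I := by
    simp only [lamRe, lamIm, a, b, c, ω, ω']; push_cast; field_simp; ring
  rw [h₁, h₂, h₃]
end

section
/- Let J be the Jacobian of the linearly-perturbed May–Leonard system at e_c, with α, β > 0 and 0 ≤ μ < 1/6. Then all eigenvalues of J have negative real part if and only if α + β < (6μ+2)/(1-6μ). -/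
open Matrix Complex

/-!
The Jacobian is the circulant matrix with first row `(c₀, c₁, c₂)`. Since
`det (circulant ![a, b, c]) = (a + b + c)(a + bω + cω²)(a + bω² + cω)` for a primitive cube
root of unity `ω`, its eigenvalues are `c₀ + c₁ + c₂ = -1` and a pair of complex numbers
whose common real part is `c₀ - (c₁ + c₂)/2`; the latter is negative exactly when
`α + β < (6μ + 2)/(1 - 6μ)`.
-/

namespace Matrix

variable {R : Type*} [CommRing R]

theorem det_circulant_fin_three_s5 {ω : R} (hω : ω ^ 2 + ω + 1 = 0) (a b c : R) :
    (circulant ![a, b, c]).det =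
      (a + b + c) * (a + b * ω + c * ω ^ 2) * (a + b * ω ^ 2 + c * ω) := by
  rw [det_fin_three]
  simp only [circulant_apply, Fin.isValue, sub_self, Fin.reduceSub, cons_val_zero, cons_val,
    cons_val_one]
  linear_combination
    (-(a + b + c) * (a * b + a * c + b * c * (1 + ω ^ 2 - ω) + (b ^ 2 + c ^ 2) * (ω - 1))) * hω

theorem circulant_fin_three_sub_smul_one (a b c z : R) :
    circulant ![a, b, c] - z • (1 : Matrix (Fin 3) (Fin 3) R) = circulant ![a - z, b, c] := by
  ext i j
  fin_cases i <;> fin_cases j <;> simp [circulant_apply]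

theorem exists_eigenvector_circulant_fin_three_iff {K : Type*} [Field K] {ω : K}
    (hω : ω ^ 2 + ω + 1 = 0) (a b c z : K) :
    (∃ v ≠ 0, circulant ![a, b, c] *ᵥ v = z • v) ↔
      z = a + b + c ∨ z = a + b * ω + c * ω ^ 2 ∨ z = a + b * ω ^ 2 + c * ω := by
  have hsub : ∀ v : Fin 3 → K, circulant ![a, b, c] *ᵥ v = z • v ↔
      circulant ![a - z, b, c] *ᵥ v = 0 := fun v => by
    rw [← circulant_fin_three_sub_smul_one, sub_mulVec, smul_mulVec, one_mulVec, sub_eq_zero]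
  simp only [hsub, exists_mulVec_eq_zero_iff, det_circulant_fin_three_s5 hω, mul_eq_zero]
  rw [or_assoc]
  refine .or ?_ (.or ?_ ?_) <;>
    exact ⟨fun h => by linear_combination -h, fun h => by linear_combination -h⟩

end Matrix

namespace Complex

theorem exists_sq_add_self_add_one_eq_zero :
    ∃ ω : ℂ, ω ^ 2 + ω + 1 = 0 ∧ ω.re = -1 / 2 ∧ (ω ^ 2).re = -1 / 2 := by
  have h3 : √3 ^ 2 = 3 := Real.sq_sqrt (by norm_num)
  refine ⟨⟨-1 / 2, √3 / 2⟩, ?_, rfl, ?_⟩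
  · apply Complex.ext
    · simp [sq]
      linear_combination (-1 / 4) * h3
    · simp [sq]
      ring
  · simp [sq]
    linear_combination (-1 / 4) * h3

theorem re_ofReal_add_mul_add_mul {u w : ℂ} (hu : u.re = -1 / 2) (hw : w.re = -1 / 2)
    (a b c : ℝ) : ((a : ℂ) + b * u + c * w).re = a - (b + c) / 2 := by
  simp [hu, hw]; ring

end Complex

section MayLeonard

variable {α β μ s : ℝ}

theorem mayLeonard_circulant_sum (hs : s * (1 + α + β) = -1) :
    s - 2 * μ + (s * β + μ) + (s * α + μ) = -1 := by
  linear_combination hs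

theorem mayLeonard_circulant_re_neg_iff (hs : s * (1 + α + β) = -1) (h : 0 < 1 + α + β)
    (hμ : μ < 1 / 6) :
    s - 2 * μ - (s * β + μ + (s * α + μ)) / 2 < 0 ↔ α + β < (6 * μ + 2) / (1 - 6 * μ) := by
  have hscaled : 2 * (1 + α + β) * (s - 2 * μ - (s * β + μ + (s * α + μ)) / 2) =
      (α + β) * (1 - 6 * μ) - (6 * μ + 2) := by
    linear_combination (2 - (α + β)) * hs
  have hc : 0 < 2 * (1 + α + β) := by positivity
  rw [lt_div_iff₀ (by linarith), ← sub_neg (a := (α + β) * (1 - 6 * μ)), ← hscaled]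
  exact ⟨mul_neg_of_pos_of_neg hc, fun hneg => neg_of_mul_neg_right hneg hc.le⟩

end MayLeonard

theorem ec_stability_iff_general (α β μ : ℝ) (hα : 0 < α) (hβ : 0 < β)
    (hμ : μ < 1 / 6) :
    let J : Matrix (Fin 3) (Fin 3) ℝ :=
      (-1 / (1 + α + β)) • !![1, α, β; β, 1, α; α, β, 1] +
        μ • !![-2, 1, 1; 1, -2, 1; 1, 1, -2]
    ((∀ z : ℂ,
        (∃ v : Fin 3 → ℂ, v ≠ 0 ∧ (J.map (Complex.ofReal)).mulVec v = z • v) →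
        z.re < 0) ↔ α + β < (6 * μ + 2) / (1 - 6 * μ)) := by
  intro J
  have hpos : 0 < 1 + α + β := by linarith
  have hs : -1 / (1 + α + β) * (1 + α + β) = -1 := div_mul_cancel₀ _ hpos.ne'
  obtain ⟨ω, hω, hωre, hω2re⟩ := Complex.exists_sq_add_self_add_one_eq_zero
  have hJ : J.map ofReal = circulant ![((-1 / (1 + α + β) - 2 * μ : ℝ) : ℂ),
      ((-1 / (1 + α + β) * β + μ : ℝ) : ℂ), ((-1 / (1 + α + β) * α + μ : ℝ) : ℂ)] := by
    ext i j
    fin_cases i <;> fin_cases j <;> simp [J, circulant_apply] <;> ring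
  simp only [hJ, exists_eigenvector_circulant_fin_three_iff hω,
    forall_eq_or_imp, forall_eq, re_ofReal_add_mul_add_mul hωre hω2re,
    re_ofReal_add_mul_add_mul hω2re hωre, and_self]
  rw [← ofReal_add, ← ofReal_add, ofReal_re, mayLeonard_circulant_sum hs,
    mayLeonard_circulant_re_neg_iff hs hpos hμ]
  norm_num

/-- For `0 ≤ μ < 1/6` and `α, β > 0`, all the eigenvalues of the Jacobian of
the linearly-perturbed May–Leonard system at `e_c` have negative real part
if and only if `α + β < (6μ+2)/(1-6μ)`. -/
theorem ec_stability_iff (α β μ : ℝ) (hα : 0 < α) (hβ : 0 < β)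
    (hμ0 : 0 ≤ μ) (hμ : μ < 1 / 6) :
    let J : Matrix (Fin 3) (Fin 3) ℝ :=
      (-1 / (1 + α + β)) • !![1, α, β; β, 1, α; α, β, 1] +
        μ • !![-2, 1, 1; 1, -2, 1; 1, 1, -2]
    ((∀ z : ℂ,
        (∃ v : Fin 3 → ℂ, v ≠ 0 ∧ (J.map (Complex.ofReal)).mulVec v = z • v) →
        z.re < 0) ↔ α + β < (6 * μ + 2) / (1 - 6 * μ)) :=
  ec_stability_iff_general α β μ hα hβ hμ
end

section
/- Let A be the matrix -(1/3)·[[1, 1-√3ω, 1+√3ω], [1+√3ω, 1, 1-√3ω], [1-√3ω, 1+√3ω, 1]] for ω ∈ ℝ with ω ≠ 0. Then the eigenvalues of A are -1, iω, and -iω; in particular A is invertible. -/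
open Matrix Complex

/-- For `ω ≠ 0`, the eigenvalues of
`A = -(1/3)·[[1, 1-√3ω, 1+√3ω], [1+√3ω, 1, 1-√3ω], [1-√3ω, 1+√3ω, 1]]`
are `-1`, `iω`, `-iω`; in particular `A` is invertible. -/
theorem A_eigenvalues (ω : ℝ) (hω : ω ≠ 0) :
    let s : ℝ := Real.sqrt 3
    let A : Matrix (Fin 3) (Fin 3) ℝ :=
      (-(1 / 3 : ℝ)) • !![1, 1 - s * ω, 1 + s * ω;
                          1 + s * ω, 1, 1 - s * ω;
                          1 - s * ω, 1 + s * ω, 1]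
    ({z : ℂ | ∃ v : Fin 3 → ℂ, v ≠ 0 ∧ (A.map (Complex.ofReal)).mulVec v = z • v}
      = {-1, Complex.I * ω, -(Complex.I * ω)}) ∧ IsUnit A := by
  intro s A
  have hs : s * s = 3 := Real.mul_self_sqrt (by norm_num)
  constructor
  · ext z
    have key : (∃ v : Fin 3 → ℂ, v ≠ 0 ∧ (A.map (Complex.ofReal)).mulVec v = z • v)
        ↔ (A.map (Complex.ofReal) - z • 1).det = 0 := by
      rw [← Matrix.exists_mulVec_eq_zero_iff]
      constructor
      · rintro ⟨v, hv, h⟩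
        exact ⟨v, hv, by rw [sub_mulVec, h, smul_mulVec, one_mulVec, sub_self]⟩
      · rintro ⟨v, hv, h⟩
        refine ⟨v, hv, ?_⟩
        rw [sub_mulVec, smul_mulVec, one_mulVec, sub_eq_zero] at h
        exact h
    have hdet : (A.map (Complex.ofReal) - z • 1).det
        = -((z + 1) * (z - Complex.I * ω) * (z + Complex.I * ω)) := by
      show ((((-(1 / 3:ℝ)) • !![1, 1 - s * ω, 1 + s * ω;
                          1 + s * ω, 1, 1 - s * ω;
                          1 - s * ω, 1 + s * ω, 1]).map (Complex.ofReal) - z • 1)).det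
        = -((z + 1) * (z - Complex.I * ω) * (z + Complex.I * ω))
      rw [Matrix.det_fin_three]
      simp [Matrix.one_apply]
      have h2 : ((s:ℂ))^2 = 3 := by
        rw [sq, ← Complex.ofReal_mul, hs]; norm_num
      ring_nf
      rw [h2, Complex.I_sq]
      ring
    simp only [Set.mem_setOf_eq, key, hdet, neg_eq_zero, mul_eq_zero,
      Set.mem_insert_iff, Set.mem_singleton_iff, add_eq_zero_iff_eq_neg,
      sub_eq_zero]
    tauto
  · rw [Matrix.isUnit_iff_isUnit_det, isUnit_iff_ne_zero]
    show (((-(1 / 3:ℝ)) • !![1, 1 - s * ω, 1 + s * ω;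
                          1 + s * ω, 1, 1 - s * ω;
                          1 - s * ω, 1 + s * ω, 1])).det ≠ 0
    rw [Matrix.det_fin_three]
    simp
    have : ¬ (ω * ω = 0) := by
      simpa using hω
    intro h
    apply this
    nlinarith [hs, h]
end

section
/- When α = β, the Jacobian of the linearly-perturbed May–Leonard system at the equal-population fixed point e_c with μ = μ_c = (α+β-2)/(6(1+α+β)) equals A = -(1/3)·[[1,1,1],[1,1,1],[1,1,1]], and A has eigenvalue 0 with geometric multiplicity 2 and eigenvalue -1 with multiplicity 1. -/
open Matrix

noncomputable def sumF : (Fin 3 → ℝ) →ₗ[ℝ] ℝ := ∑ i, LinearMap.proj i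

lemma sumF_apply (x : Fin 3 → ℝ) : sumF x = x 0 + x 1 + x 2 := by
  simp [sumF, Fin.sum_univ_three]

noncomputable def A0 : Matrix (Fin 3) (Fin 3) ℝ := (-(1 / 3 : ℝ)) • !![1,1,1;1,1,1;1,1,1]

lemma mulVec_A0 (x : Fin 3 → ℝ) (i : Fin 3) :
    A0.mulVec x i = -(1/3) * (x 0 + x 1 + x 2) := by
  fin_cases i <;>
    simp [A0, Matrix.mulVec, dotProduct, Fin.sum_univ_three,
      Matrix.smul_apply, Matrix.cons_val_zero, Matrix.cons_val_one,
      Matrix.head_cons, Matrix.vecHead, Matrix.vecTail] <;> ring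

lemma aux1 : Module.finrank ℝ (LinearMap.ker (Matrix.toLin' A0)) = 2 := by
  have hker : LinearMap.ker (Matrix.toLin' A0) = LinearMap.ker sumF := by
    ext x
    simp only [LinearMap.mem_ker, Matrix.toLin'_apply, sumF_apply]
    constructor
    · intro h
      have := congrFun h 0
      rw [mulVec_A0] at this
      simp at this
      linarith
    · intro h
      funext i
      rw [mulVec_A0, h]
      simp
  rw [hker]
  have hrn := LinearMap.finrank_range_add_finrank_ker sumF
  have hsurj : Function.Surjective sumF := by
    intro r
    exact ⟨fun _ => r/3, by rw [sumF_apply]; ring⟩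
  rw [LinearMap.range_eq_top.mpr hsurj, finrank_top] at hrn
  simp [Module.finrank_self, Module.finrank_fin_fun] at hrn
  omega

lemma aux2 : Module.finrank ℝ (LinearMap.ker (Matrix.toLin' (A0 + 1))) = 1 := by
  have hker : LinearMap.ker (Matrix.toLin' (A0 + 1)) =
      Submodule.span ℝ {(fun _ => (1:ℝ) : Fin 3 → ℝ)} := by
    apply le_antisymm
    · intro x hx
      rw [LinearMap.mem_ker, Matrix.toLin'_apply] at hx
      have hx' : ∀ i, A0.mulVec x i + x i = 0 := by
        intro i
        have := congrFun hx i
        simpa [Matrix.add_mulVec, Matrix.one_mulVec] using this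
      have h0 := hx' 0; have h1 := hx' 1; have h2 := hx' 2
      rw [mulVec_A0] at h0 h1 h2
      have hxeq : x = (x 0) • (fun _ => (1:ℝ)) := by
        funext i
        fin_cases i <;> simp <;> linarith
      rw [hxeq]
      exact Submodule.smul_mem _ _ (Submodule.mem_span_singleton_self _)
    · rw [Submodule.span_le, Set.singleton_subset_iff]
      rw [SetLike.mem_coe, LinearMap.mem_ker, Matrix.toLin'_apply]
      funext i
      have := mulVec_A0 (fun _ => (1:ℝ)) i
      simp only [Matrix.add_mulVec, Matrix.one_mulVec, Pi.add_apply, this]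
      norm_num
  rw [hker]
  exact finrank_span_singleton (by
    intro h
    have := congrFun h 0
    simp at this)

/-- When `α = β`, the Jacobian of the linearly-perturbed May–Leonard system at
`e_c` with `μ = μ_c` equals `-(1/3)` times the all-ones matrix, which has
eigenvalue `0` with geometric multiplicity `2` and eigenvalue `-1` with
multiplicity `1`. -/
theorem degenerate_jacobian (α β : ℝ) (hα : 0 < α) (hab : α = β) :
    let μc : ℝ := (α + β - 2) / (6 * (1 + α + β))
    let J : Matrix (Fin 3) (Fin 3) ℝ :=
      (-1 / (1 + α + β)) • !![1, α, β; β, 1, α; α, β, 1] +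
        μc • !![-2, 1, 1; 1, -2, 1; 1, 1, -2]
    let A : Matrix (Fin 3) (Fin 3) ℝ := (-(1 / 3 : ℝ)) • !![1,1,1;1,1,1;1,1,1]
    J = A ∧
    Module.finrank ℝ (LinearMap.ker (Matrix.toLin' A)) = 2 ∧
    Module.finrank ℝ (LinearMap.ker (Matrix.toLin' (A + 1))) = 1 := by
  subst hab
  intro μc J A
  simp only [μc, J, A]
  refine ⟨?_, aux1, aux2⟩
  have hne : (1 + α + α) ≠ 0 := by positivity
  ext i j
  fin_cases i <;> fin_cases j <;>
    simp [Matrix.add_apply, Matrix.smul_apply, Matrix.vecHead, Matrix.vecTail] <;>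
    field_simp <;> ring
end

section
/- Let β > 0, β ≠ 1, μ ≥ 0, and set α = β, σ = 1+2β, λ = (β-1)/(1+2β). Consider the cylindrical system with θ = 0: 0 = (λ-3μ)R + σλR² - ((σ+3)/2)RZ and 0 = -Z - σZ² + 2λσR². Then the solutions with R ≠ 0 are given by R*_± = β/(6(1+β)) - (1+2β)μ/(3(1+β)) ± √((β-1)(2+β)²(8μ² - 1 + β(1-4μ)²)) / (6(β²-1)), and Z*_± = (β-1)/((2+β)(1+2β)) - 3μ/(2+β) + ((β-1)/(2+β))·R*_±, provided the discriminant (β-1)(8μ² - 1 + β(1-4μ)²) ≥ 0. -/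
/-!
For `R ≠ 0` the first equation can be divided by `R`, leaving a relation that is linear in
`R` and `Z`. Solving it for `Z` and substituting into the second equation gives a quadratic
in `R` whose discriminant is nine times the radicand `(β - 1)(2 + β)²(8μ² - 1 + β(1 - 4μ)²)`,
so the quadratic formula yields `R*_±`, and the linear relation then yields `Z*_±`.
-/

namespace MayLeonard

theorem z_eq_of_fixedPoint {β μ R Z : ℝ} (hβ : 0 < β) (hR : R ≠ 0)
    (h1 : (((β - 1) / (1 + 2 * β)) - 3 * μ) * R
        + (1 + 2 * β) * ((β - 1) / (1 + 2 * β)) * R ^ 2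
        - (((1 + 2 * β) + 3) / 2) * R * Z = 0) :
    Z = (β - 1) / ((2 + β) * (1 + 2 * β)) - 3 * μ / (2 + β) + ((β - 1) / (2 + β)) * R := by
  rw [mul_div_cancel₀ _ (by positivity)] at h1
  have hlin : R * ((β - 1) - 3 * (1 + 2 * β) * μ + (β - 1) * (1 + 2 * β) * R
      - (2 + β) * (1 + 2 * β) * Z) = 0 := by
    field_simp at h1
    linear_combination h1 / 2
  have hlin' := (mul_eq_zero.mp hlin).resolve_left hR
  field_simp
  linear_combination -hlin'

theorem r_quadratic_of_fixedPoint {β μ R Z : ℝ} (hβ : 0 < β)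
    (hZ : Z = (β - 1) / ((2 + β) * (1 + 2 * β)) - 3 * μ / (2 + β) + ((β - 1) / (2 + β)) * R)
    (h2 : -Z - (1 + 2 * β) * Z ^ 2
        + 2 * ((β - 1) / (1 + 2 * β)) * (1 + 2 * β) * R ^ 2 = 0) :
    9 * (β ^ 2 - 1) * (R * R) + -(3 * (β - 1) * (β - 2 * (1 + 2 * β) * μ)) * R
      + -((β - 1 - 3 * (1 + 2 * β) * μ) * (1 - 3 * μ)) = 0 := by
  rw [mul_assoc 2, div_mul_cancel₀ _ (by positivity)] at h2
  subst hZ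
  field_simp at h2
  refine (mul_eq_zero.mp ?_).resolve_left (by positivity : 1 + 2 * β ≠ 0)
  linear_combination h2

theorem discrim_r_quadratic {β μ : ℝ}
    (hdisc : 0 ≤ (β - 1) * (2 + β) ^ 2 * (8 * μ ^ 2 - 1 + β * (1 - 4 * μ) ^ 2)) :
    discrim (9 * (β ^ 2 - 1)) (-(3 * (β - 1) * (β - 2 * (1 + 2 * β) * μ)))
        (-((β - 1 - 3 * (1 + 2 * β) * μ) * (1 - 3 * μ)))
      = 3 * √((β - 1) * (2 + β) ^ 2 * (8 * μ ^ 2 - 1 + β * (1 - 4 * μ) ^ 2))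
        * (3 * √((β - 1) * (2 + β) ^ 2 * (8 * μ ^ 2 - 1 + β * (1 - 4 * μ) ^ 2))) := by
  rw [mul_mul_mul_comm, Real.mul_self_sqrt hdisc, discrim]
  ring

theorem r_quadratic_root_add_eq {β μ : ℝ} (hβ : 0 < β) (hβ2 : β ^ 2 - 1 ≠ 0) (s : ℝ) :
    (-(-(3 * (β - 1) * (β - 2 * (1 + 2 * β) * μ))) + 3 * s) / (2 * (9 * (β ^ 2 - 1)))
      = β / (6 * (1 + β)) - (1 + 2 * β) * μ / (3 * (1 + β)) + s / (6 * (β ^ 2 - 1)) := by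
  field_simp
  ring

theorem r_quadratic_root_sub_eq {β μ : ℝ} (hβ : 0 < β) (hβ2 : β ^ 2 - 1 ≠ 0) (s : ℝ) :
    (-(-(3 * (β - 1) * (β - 2 * (1 + 2 * β) * μ))) - 3 * s) / (2 * (9 * (β ^ 2 - 1)))
      = β / (6 * (1 + β)) - (1 + 2 * β) * μ / (3 * (1 + β)) - s / (6 * (β ^ 2 - 1)) := by
  field_simp
  ring

end MayLeonard

open MayLeonard in
theorem cylindrical_fixed_points_theta_zero_general (β μ : ℝ) (hβ : 0 < β)
    (hβ1 : β ≠ 1)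
    (hdisc : 0 ≤ (β - 1) * (2 + β) ^ 2 * (8 * μ ^ 2 - 1 + β * (1 - 4 * μ) ^ 2))
    (R Z : ℝ) (hR : R ≠ 0)
    (h1 : (((β - 1) / (1 + 2 * β)) - 3 * μ) * R
        + (1 + 2 * β) * ((β - 1) / (1 + 2 * β)) * R ^ 2
        - (((1 + 2 * β) + 3) / 2) * R * Z = 0)
    (h2 : -Z - (1 + 2 * β) * Z ^ 2
        + 2 * ((β - 1) / (1 + 2 * β)) * (1 + 2 * β) * R ^ 2 = 0) :
    let Rp : ℝ := β / (6 * (1 + β)) - (1 + 2 * β) * μ / (3 * (1 + β))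
      + Real.sqrt ((β - 1) * (2 + β) ^ 2 * (8 * μ ^ 2 - 1 + β * (1 - 4 * μ) ^ 2))
        / (6 * (β ^ 2 - 1))
    let Rm : ℝ := β / (6 * (1 + β)) - (1 + 2 * β) * μ / (3 * (1 + β))
      - Real.sqrt ((β - 1) * (2 + β) ^ 2 * (8 * μ ^ 2 - 1 + β * (1 - 4 * μ) ^ 2))
        / (6 * (β ^ 2 - 1))
    let Zp : ℝ := (β - 1) / ((2 + β) * (1 + 2 * β)) - 3 * μ / (2 + β)
      + ((β - 1) / (2 + β)) * Rp
    let Zm : ℝ := (β - 1) / ((2 + β) * (1 + 2 * β)) - 3 * μ / (2 + β)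
      + ((β - 1) / (2 + β)) * Rm
    ((R = Rp ∧ Z = Zp) ∨ (R = Rm ∧ Z = Zm)) := by
  intro Rp Rm Zp Zm
  have hβ2 : β ^ 2 - 1 ≠ 0 := by
    rw [sq, mul_self_sub_one]
    exact mul_ne_zero (by positivity) (sub_ne_zero.mpr hβ1)
  have hZ := z_eq_of_fixedPoint hβ hR h1
  rcases (quadratic_eq_zero_iff (mul_ne_zero (by norm_num) hβ2) (discrim_r_quadratic hdisc) R).mp
      (r_quadratic_of_fixedPoint hβ hZ h2) with hRp | hRm
  · rw [r_quadratic_root_add_eq hβ hβ2] at hRp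
    exact .inl ⟨hRp, by rw [hZ, hRp]⟩
  · rw [r_quadratic_root_sub_eq hβ hβ2] at hRm
    exact .inr ⟨hRm, by rw [hZ, hRm]⟩

/-- For `α = β`, `θ = 0`, the nonzero-`R` fixed points of the cylindrical
system are given by the explicit formulas `R*₊, R*₋, Z*₊, Z*₋`. -/
theorem cylindrical_fixed_points_theta_zero (β μ : ℝ) (hβ : 0 < β)
    (hβ1 : β ≠ 1) (hμ : 0 ≤ μ)
    (hdisc : 0 ≤ (β - 1) * (2 + β) ^ 2 * (8 * μ ^ 2 - 1 + β * (1 - 4 * μ) ^ 2))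
    (R Z : ℝ) (hR : R ≠ 0)
    (h1 : (((β - 1) / (1 + 2 * β)) - 3 * μ) * R
        + (1 + 2 * β) * ((β - 1) / (1 + 2 * β)) * R ^ 2
        - (((1 + 2 * β) + 3) / 2) * R * Z = 0)
    (h2 : -Z - (1 + 2 * β) * Z ^ 2
        + 2 * ((β - 1) / (1 + 2 * β)) * (1 + 2 * β) * R ^ 2 = 0) :
    let Rp : ℝ := β / (6 * (1 + β)) - (1 + 2 * β) * μ / (3 * (1 + β))
      + Real.sqrt ((β - 1) * (2 + β) ^ 2 * (8 * μ ^ 2 - 1 + β * (1 - 4 * μ) ^ 2))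
        / (6 * (β ^ 2 - 1))
    let Rm : ℝ := β / (6 * (1 + β)) - (1 + 2 * β) * μ / (3 * (1 + β))
      - Real.sqrt ((β - 1) * (2 + β) ^ 2 * (8 * μ ^ 2 - 1 + β * (1 - 4 * μ) ^ 2))
        / (6 * (β ^ 2 - 1))
    let Zp : ℝ := (β - 1) / ((2 + β) * (1 + 2 * β)) - 3 * μ / (2 + β)
      + ((β - 1) / (2 + β)) * Rp
    let Zm : ℝ := (β - 1) / ((2 + β) * (1 + 2 * β)) - 3 * μ / (2 + β)
      + ((β - 1) / (2 + β)) * Rm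
    ((R = Rp ∧ Z = Zp) ∨ (R = Rm ∧ Z = Zm)) :=
  cylindrical_fixed_points_theta_zero_general β μ hβ hβ1 hdisc R Z hR h1 h2
end

section
/- Let U₀ = (1,0,0) and U₁ = (u₁, v₁, w₁) with v₁ = 1/(β-1), w₁ = 1/(α-1), u₁ = α/(1-β) + β/(1-α) - 2. Then U(μ) = U₀ + μU₁ satisfies the fixed-point equations of the linearly-perturbed May–Leonard system up to an error of order O(μ²): i.e., substituting U(μ) into the right-hand side F(U, μ) of the system yields F(U₀ + μU₁, μ) = μ²·G(μ) for a polynomial remainder G; in particular the terms of order μ⁰ and μ¹ in F(U₀ + μU₁, μ) vanish identically. -/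
open Polynomial

lemma div_one_sub_add_mul_one_div_sub_one {K : Type*} [DivisionRing K] (a b : K) :
    a / (1 - b) + a * (1 / (b - 1)) = 0 := by
  rw [← neg_sub b 1, div_neg, one_div, ← div_eq_mul_inv, neg_add_cancel]

/-- The `μ⁰` terms vanish because `(1,0,0)` is an equilibrium of the unperturbed system; the three
hypotheses are exactly the vanishing of the `μ¹` terms, so each component is `μ²` times a constant. -/
theorem mayLeonard_expansion_e1_of_linearized (α β u1 v1 w1 : ℝ)
    (hu : u1 + α * v1 + β * w1 + 2 = 0) (hv : (β - 1) * v1 = 1) (hw : (α - 1) * w1 = 1) :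
    let M1 : ℝ → ℝ := fun μ => 1 + μ * u1
    let M2 : ℝ → ℝ := fun μ => 0 + μ * v1
    let M3 : ℝ → ℝ := fun μ => 0 + μ * w1
    ∃ G1 G2 G3 : Polynomial ℝ,
      (∀ μ : ℝ,
        M1 μ * (1 - M1 μ - α * M2 μ - β * M3 μ)
          + μ * (-2 * M1 μ + M2 μ + M3 μ) = μ ^ 2 * G1.eval μ) ∧
      (∀ μ : ℝ,
        M2 μ * (1 - β * M1 μ - M2 μ - α * M3 μ)
          + μ * (M1 μ - 2 * M2 μ + M3 μ) = μ ^ 2 * G2.eval μ) ∧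
      (∀ μ : ℝ,
        M3 μ * (1 - α * M1 μ - β * M2 μ - M3 μ)
          + μ * (M1 μ + M2 μ - 2 * M3 μ) = μ ^ 2 * G3.eval μ) := by
  intro M1 M2 M3
  refine ⟨C (v1 + w1),
    C (-v1 * (β * u1 + v1 + α * w1) + u1 - 2 * v1 + w1),
    C (-w1 * (α * u1 + β * v1 + w1) + u1 + v1 - 2 * w1),
    fun μ => ?_, fun μ => ?_, fun μ => ?_⟩ <;> simp only [M1, M2, M3, eval_C]
  · linear_combination -(μ * (1 + μ * u1)) * hu
  · linear_combination -μ * hv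
  · linear_combination -μ * hw

theorem first_order_expansion_e1_general (α β : ℝ)
    (hα1 : α ≠ 1) (hβ1 : β ≠ 1) :
    let v1 : ℝ := 1 / (β - 1)
    let w1 : ℝ := 1 / (α - 1)
    let u1 : ℝ := α / (1 - β) + β / (1 - α) - 2
    let M1 : ℝ → ℝ := fun μ => 1 + μ * u1
    let M2 : ℝ → ℝ := fun μ => 0 + μ * v1
    let M3 : ℝ → ℝ := fun μ => 0 + μ * w1
    ∃ G1 G2 G3 : Polynomial ℝ,
      (∀ μ : ℝ,
        M1 μ * (1 - M1 μ - α * M2 μ - β * M3 μ)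
          + μ * (-2 * M1 μ + M2 μ + M3 μ) = μ ^ 2 * G1.eval μ) ∧
      (∀ μ : ℝ,
        M2 μ * (1 - β * M1 μ - M2 μ - α * M3 μ)
          + μ * (M1 μ - 2 * M2 μ + M3 μ) = μ ^ 2 * G2.eval μ) ∧
      (∀ μ : ℝ,
        M3 μ * (1 - α * M1 μ - β * M2 μ - M3 μ)
          + μ * (M1 μ + M2 μ - 2 * M3 μ) = μ ^ 2 * G3.eval μ) := by
  intro v1 w1 u1
  have hu : u1 + α * v1 + β * w1 + 2 = 0 := by
    linear_combination div_one_sub_add_mul_one_div_sub_one α β +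
      div_one_sub_add_mul_one_div_sub_one β α
  exact mayLeonard_expansion_e1_of_linearized α β u1 v1 w1 hu
    (mul_one_div_cancel (sub_ne_zero.mpr hβ1)) (mul_one_div_cancel (sub_ne_zero.mpr hα1))

/-- The first-order expansion `U(μ) = U₀ + μU₁` about the single-population
equilibrium `e₁ = (1,0,0)` satisfies the fixed-point equations of the
linearly-perturbed May–Leonard system up to `O(μ²)`: each component of
`F(U₀ + μU₁, μ)` is `μ²` times a polynomial in `μ`. -/
theorem first_order_expansion_e1 (α β : ℝ) (hα : 0 < α) (hβ : 0 < β)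
    (hα1 : α ≠ 1) (hβ1 : β ≠ 1) :
    let v1 : ℝ := 1 / (β - 1)
    let w1 : ℝ := 1 / (α - 1)
    let u1 : ℝ := α / (1 - β) + β / (1 - α) - 2
    let M1 : ℝ → ℝ := fun μ => 1 + μ * u1
    let M2 : ℝ → ℝ := fun μ => 0 + μ * v1
    let M3 : ℝ → ℝ := fun μ => 0 + μ * w1
    ∃ G1 G2 G3 : Polynomial ℝ,
      (∀ μ : ℝ,
        M1 μ * (1 - M1 μ - α * M2 μ - β * M3 μ)
          + μ * (-2 * M1 μ + M2 μ + M3 μ) = μ ^ 2 * G1.eval μ) ∧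
      (∀ μ : ℝ,
        M2 μ * (1 - β * M1 μ - M2 μ - α * M3 μ)
          + μ * (M1 μ - 2 * M2 μ + M3 μ) = μ ^ 2 * G2.eval μ) ∧
      (∀ μ : ℝ,
        M3 μ * (1 - α * M1 μ - β * M2 μ - M3 μ)
          + μ * (M1 μ + M2 μ - 2 * M3 μ) = μ ^ 2 * G3.eval μ) :=
  first_order_expansion_e1_general α β hα1 hβ1
end

section
/- Suppose the parameters lie on the Hopf line α + β = (6μ+2)/(1-6μ) with 0 ≤ μ < 1/6 and α ≠ β. Then the Jacobian J of the linearly-perturbed May–Leonard system at e_c has exactly one real eigenvalue, -1, and a complex-conjugate pair ±iω with ω = √3(β-α)/(2(1+α+β)) ≠ 0; consequently the sum of all eigenvalues (trace of J) equals -1 and det J = -ω². -/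
open Matrix Complex

lemma circ_det_aux (b c : ℝ) (hbc : b + c = -2/3) :
    (!![(-1/3 : ℝ), b, c; c, -1/3, b; b, c, -1/3]).det = -(3*(b-c)^2/4) := by
  simp [Matrix.det_fin_three]
  linear_combination (b^2 - b*c + c^2 + (1/12)*(b+c) - 1/18) * hbc

lemma circ_char_aux (b c : ℝ) (z : ℂ) (hbc : b + c = -2/3) :
    ((!![(-1/3 : ℝ), b, c; c, -1/3, b; b, c, -1/3]).map Complex.ofReal
        - z • (1 : Matrix (Fin 3) (Fin 3) ℂ)).det
      = -(z+1) * (z - Complex.I * (Real.sqrt 3 * (b - c)/2))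
          * (z + Complex.I * (Real.sqrt 3 * (b-c)/2)) := by
  have hbc' : (b:ℂ) + c = -2/3 := by exact_mod_cast hbc
  have h3 : ((Real.sqrt 3 : ℝ):ℂ)^2 = 3 := by
    rw [← Complex.ofReal_pow, Real.sq_sqrt (by norm_num : (3:ℝ) ≥ 0)]; norm_num
  simp [Matrix.det_fin_three, Matrix.one_apply]
  linear_combination
    ((3/4)*z*((b:ℂ)+c-2/3) + ((b:ℂ)^2 - b*c + c^2 + (1/12)*((b:ℂ)+c) - 1/18)) * hbc'
    + (-(1/4)*((b:ℂ)-c)^2*(1+z)*((Real.sqrt 3 : ℝ):ℂ)^2) * Complex.I_sq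
    + ((1/4)*((b:ℂ)-c)^2*(1+z)) * h3

/-- On the Hopf line `α + β = (6μ+2)/(1-6μ)` with `0 ≤ μ < 1/6` and `α ≠ β`,
the Jacobian `J` at `e_c` has eigenvalues `-1` and `±iω` with
`ω = √3(β-α)/(2(1+α+β)) ≠ 0`; consequently `trace J = -1` and `det J = -ω²`. -/
theorem hopf_line_spectrum (α β μ : ℝ) (hα : 0 < α) (hβ : 0 < β)
    (hμ0 : 0 ≤ μ) (hμ : μ < 1 / 6) (hne : α ≠ β)
    (hline : α + β = (6 * μ + 2) / (1 - 6 * μ)) :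
    let J : Matrix (Fin 3) (Fin 3) ℝ :=
      (-1 / (1 + α + β)) • !![1, α, β; β, 1, α; α, β, 1] +
        μ • !![-2, 1, 1; 1, -2, 1; 1, 1, -2]
    let ω : ℝ := Real.sqrt 3 * (β - α) / (2 * (1 + α + β))
    (ω ≠ 0 ∧
     {z : ℂ | ∃ v : Fin 3 → ℂ, v ≠ 0 ∧ (J.map (Complex.ofReal)).mulVec v = z • v}
        = {-1, Complex.I * ω, -(Complex.I * ω)} ∧
     J.trace = -1 ∧ J.det = -ω ^ 2) := by
  intro J ω
  have hs : (0:ℝ) < 1 + α + β := by linarith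
  have hs' : (1:ℝ) + α + β ≠ 0 := ne_of_gt hs
  have h6 : (1:ℝ) - 6 * μ ≠ 0 := by intro h; nlinarith
  have E : (α + β) * (1 - 6 * μ) = 6 * μ + 2 := by
    field_simp at hline; linarith
  have hs3 : (1 + α + β) * (1 - 6*μ) = 3 := by linear_combination E
  have h3 : (0:ℝ) < Real.sqrt 3 := by positivity
  have hωne : ω ≠ 0 := by
    simp only [ω, div_ne_zero_iff, mul_ne_zero_iff]
    exact ⟨⟨ne_of_gt h3, sub_ne_zero.2 (Ne.symm hne)⟩, ⟨two_ne_zero, hs'⟩⟩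
  set b : ℝ := -α*(1-6*μ)/3 + μ with hb
  set c : ℝ := -β*(1-6*μ)/3 + μ with hc
  have hbc : b + c = -2/3 := by rw [hb, hc]; linear_combination (-1/3) * E
  have hinv : -1/(1+α+β) = -(1-6*μ)/3 := by
    rw [div_eq_div_iff hs' (by norm_num : (3:ℝ) ≠ 0)]; linear_combination hs3
  have hJ : J = !![(-1/3 : ℝ), b, c; c, -1/3, b; b, c, -1/3] := by
    simp only [J]
    ext i j
    fin_cases i <;> fin_cases j <;>
      simp [Matrix.add_apply, Matrix.smul_apply, Matrix.vecHead, Matrix.vecTail, hinv, hb, hc] <;> ring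
  have hw : ω = Real.sqrt 3 * (b - c) / 2 := by
    simp only [ω, hb, hc]
    rw [div_eq_div_iff (by positivity : (2:ℝ)*(1+α+β) ≠ 0) (by norm_num : (2:ℝ) ≠ 0)]
    linear_combination (Real.sqrt 3 * (β - α) * (-2/3)) * hs3
  refine ⟨hωne, ?_, ?_, ?_⟩
  · -- eigenvalue set
    ext z
    simp only [Set.mem_setOf_eq, Set.mem_insert_iff, Set.mem_singleton_iff]
    have hiff : (∃ v : Fin 3 → ℂ, v ≠ 0 ∧ (J.map Complex.ofReal).mulVec v = z • v) ↔
        ((J.map Complex.ofReal) - z • (1 : Matrix (Fin 3) (Fin 3) ℂ)).det = 0 := by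
      rw [← Matrix.exists_mulVec_eq_zero_iff]
      simp only [Matrix.sub_mulVec, Matrix.smul_mulVec, Matrix.one_mulVec,
        sub_eq_zero]
    have hwC : ((ω:ℝ):ℂ) = (Real.sqrt 3 : ℝ) * ((b:ℂ) - (c:ℂ)) / 2 := by
      rw [hw]; push_cast; ring
    rw [hiff, hJ, circ_char_aux b c z hbc, ← hwC]
    rw [mul_eq_zero, mul_eq_zero, neg_eq_zero]
    constructor
    · rintro ((h | h) | h)
      · exact Or.inl (by linear_combination h)
      · exact Or.inr (Or.inl (by linear_combination h))
      · exact Or.inr (Or.inr (by linear_combination h))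
    · rintro (h | h | h)
      · exact Or.inl (Or.inl (by linear_combination h))
      · exact Or.inl (Or.inr (by linear_combination h))
      · exact Or.inr (by linear_combination h)
  · -- trace
    rw [hJ]
    simp [Matrix.trace, Matrix.diag, Fin.sum_univ_three]
    norm_num
  · -- det
    rw [hJ, circ_det_aux b c hbc, hw]
    rw [div_pow, mul_pow, Real.sq_sqrt (by norm_num : (3:ℝ) ≥ 0)]
    norm_num
end
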